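/- (Proposition 1(2), distance of the reflected code) Let M ≥ 0, w ≥ 1, and let T₁, …, T_k ⊆ {0, 1, …, M} be finite sets of size w such that each Δ⁺(T_i) has exactly w(w−1)/2 elements and the Δ⁺(T_i) are pairwise disjoint. Let π be a permutation of {1, …, k} and define the reflected supports U_i = {M − t : t ∈ T_{π(i)}} with indicator polynomials p_i = Σ_{u ∈ U_i} D^u ∈ F₂[D, D⁻¹]. Then the minimum over all nonzero tuples (c₁, …, c_k, c_{k+1}) ∈ F₂[D, D⁻¹]^{k+1} satisfying Σ_{i=1}^k p_i · c_i + c_{k+1} = 0 of the total Hamming weight Σ_{j=1}^{k+1} wt(c_j) equals w + 1; that is, the reflected systematic code has the same free distance w + 1 as the original code. -/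

import Mathlib

open LaurentPolynomial

/-- The positive difference set of a finite set of integers:
`Δ⁺(T) = {t' − t : t, t' ∈ T, t' > t}`. -/
def posDiff (T : Finset ℤ) : Finset ℤ :=
  ((T ×ˢ T).filter (fun p => p.1 < p.2)).image (fun p => p.2 - p.1)

/-- The Hamming weight of a Laurent polynomial over `F₂`: the number of its nonzero
coefficients. -/
noncomputable def wt (c : LaurentPolynomial (ZMod 2)) : ℕ := c.coeff.support.card

/-!
Reflection `t ↦ M - t` maps `Δ⁺(T)` onto itself, so the reflected supports `U i` again have all
nonzero differences distinct, within each set and across sets. Take a nonzero codeword, an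
information component `c i ≠ 0` and `a` in its support. For every `u ∈ U i` the monomial
`D^(a + u)` of `p i * c i` either survives in the parity component, or is cancelled by a product
`D^u' * D^b` with `u' ∈ U j` and `(j, b) ≠ (i, a)` in the support of the information part; two
distinct `u` cancelled by the same `(j, b)` would give two equal differences. Hence
`w ≤ wt(parity) + (wt(information) - 1)`. The codeword `(eᵢ, -p i)` has weight `w + 1`.
-/

open Finset

lemma mem_posDiff {T : Finset ℤ} {d : ℤ} :
    d ∈ posDiff T ↔ ∃ a ∈ T, ∃ b ∈ T, a < b ∧ b - a = d := by
  simp only [posDiff, mem_image, mem_filter, mem_product, Prod.exists]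
  grind

lemma posDiff_image_sub (T : Finset ℤ) (M : ℤ) :
    posDiff (T.image (M - ·)) = posDiff T := by
  ext d
  simp only [mem_posDiff, mem_image]
  constructor
  · rintro ⟨_, ⟨a, ha, rfl⟩, _, ⟨b, hb, rfl⟩, hlt, rfl⟩
    exact ⟨b, hb, a, ha, by omega, by omega⟩
  · rintro ⟨a, ha, b, hb, hlt, rfl⟩
    exact ⟨M - b, ⟨b, hb, rfl⟩, M - a, ⟨a, ha, rfl⟩, by omega, by omega⟩

lemma injOn_sub_of_card_posDiff {T : Finset ℤ} (h : #(posDiff T) = #T * (#T - 1) / 2) :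
    Set.InjOn (fun x : ℤ × ℤ => x.2 - x.1) ({x ∈ T ×ˢ T | x.1 < x.2} : Finset (ℤ × ℤ)) := by
  rw [← card_image_iff, card_product_filter_lt, Nat.choose_two_right]
  exact h

/-- The difference property of a strong difference triangle set. -/
def HasDistinctDifferences {ι : Type*} (U : ι → Finset ℤ) : Prop :=
  ∀ i j, ∀ a ∈ U i, ∀ b ∈ U i, ∀ a' ∈ U j, ∀ b' ∈ U j,
    a ≠ b → b - a = b' - a' → i = j ∧ a = a' ∧ b = b'

lemma hasDistinctDifferences_of_card_posDiff {ι : Type*} {U : ι → Finset ℤ}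
    (hfull : ∀ i, #(posDiff (U i)) = #(U i) * (#(U i) - 1) / 2)
    (hdisj : Pairwise fun i j => Disjoint (posDiff (U i)) (posDiff (U j))) :
    HasDistinctDifferences U := by
  intro i j a ha b hb a' ha' b' hb' hab heq
  wlog hlt : a < b generalizing a b a' b'
  · obtain ⟨rfl, h₁, h₂⟩ := this b hb a ha b' hb' a' ha' hab.symm (by omega) (by omega)
    exact ⟨rfl, h₂, h₁⟩
  have hij : i = j := by
    by_contra hij
    refine disjoint_left.mp (hdisj hij) (mem_posDiff.mpr ⟨a, ha, b, hb, hlt, rfl⟩) ?_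
    exact mem_posDiff.mpr ⟨a', ha', b', hb', by omega, heq.symm⟩
  subst hij
  have := injOn_sub_of_card_posDiff (hfull i) (by simp [ha, hb, hlt] : (a, b) ∈ _)
    (by simp [ha', hb', show a' < b' by omega] : (a', b') ∈ _) heq
  simp only [Prod.mk.injEq] at this
  exact ⟨rfl, this⟩

namespace LaurentPolynomial

variable {R : Type*}

section Semiring

variable [Semiring R]

lemma coeff_T_mul (n : ℤ) (f : R[T;T⁻¹]) (m : ℤ) : (T n * f).coeff m = f.coeff (m - n) := by
  rw [show (T n : R[T;T⁻¹]) = .single n 1 from rfl, AddMonoidAlgebra.coeff_single_mul_apply,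
    one_mul, neg_add_eq_sub]

lemma coeff_sum_sum_T_mul {ι : Type*} (s : Finset ι) (U : ι → Finset ℤ) (c : ι → R[T;T⁻¹])
    (m : ℤ) :
    (∑ j ∈ s, (∑ u ∈ U j, T u) * c j).coeff m = ∑ j ∈ s, ∑ u ∈ U j, (c j).coeff (m - u) := by
  simp only [Finset.sum_mul, AddMonoidAlgebra.coeff_sum, Finsupp.finsetSum_apply, coeff_T_mul]

lemma support_coeff_sum_T [Nontrivial R] (U : Finset ℤ) :
    (∑ u ∈ U, T u : R[T;T⁻¹]).coeff.support = U := by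
  ext m
  simp

variable {ι : Type*} [Fintype ι] {U : ι → Finset ℤ}

lemma exists_mem_erase_sub_mem_of_coeff_eq_zero [DecidableEq ι] (c : ι → R[T;T⁻¹])
    {i : ι} {a u : ℤ} (ha : (c i).coeff a ≠ 0) (hu : u ∈ U i)
    (hq : (∑ j, (∑ u ∈ U j, T u) * c j).coeff (a + u) = 0) :
    ∃ x ∈ (univ.sigma fun j => (c j).coeff.support).erase ⟨i, a⟩, a + u - x.2 ∈ U x.1 := by
  rw [coeff_sum_sum_T_mul, sum_sigma'] at hq
  have hiu : (⟨i, u⟩ : (_ : ι) × ℤ) ∈ univ.sigma U := mem_sigma.mpr ⟨mem_univ i, hu⟩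
  obtain ⟨⟨j, v⟩, hv, hne⟩ := exists_ne_zero_of_sum_ne_zero fun h => ha <| by
    rwa [← add_sum_erase _ _ hiu, h, add_zero, add_sub_cancel_right] at hq
  simp only [mem_erase, ne_eq, Sigma.mk.injEq, not_and, heq_eq_eq, mem_sigma, mem_univ,
    true_and] at hv
  refine ⟨⟨j, a + u - v⟩, ?_, by simpa using hv.2⟩
  simp only [mem_erase, ne_eq, Sigma.mk.injEq, not_and, heq_eq_eq, mem_sigma, mem_univ, true_and,
    Finsupp.mem_support_iff]
  exact ⟨fun hji h => hv.1 hji (by omega), hne⟩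

theorem _root_.HasDistinctDifferences.card_add_one_le (hU : HasDistinctDifferences U)
    (c : ι → R[T;T⁻¹]) {i : ι} (hci : c i ≠ 0) :
    #(U i) + 1 ≤
      ∑ j, #(c j).coeff.support + #(∑ j, (∑ u ∈ U j, T u) * c j).coeff.support := by
  classical
  obtain ⟨a, ha⟩ : (c i).coeff.support.Nonempty := by
    simpa [Finsupp.support_nonempty_iff] using hci
  set q := ∑ j, (∑ u ∈ U j, T u) * c j
  set S := univ.sigma fun j => (c j).coeff.support
  have hA : #{u ∈ U i | q.coeff (a + u) = 0} ≤ #(S.erase ⟨i, a⟩) := by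
    refine card_le_card_of_forall_subsingleton (fun u x => a + u - x.2 ∈ U x.1)
      (fun u hu => ?_) ?_
    · rw [mem_filter] at hu
      exact exists_mem_erase_sub_mem_of_coeff_eq_zero c (Finsupp.mem_support_iff.mp ha) hu.1 hu.2
    · rintro ⟨j, b⟩ hx u₁ hu₁ u₂ hu₂
      simp only [Set.mem_ofPred_eq, mem_filter] at hu₁ hu₂
      by_contra hne
      obtain ⟨rfl, h, -⟩ := hU i j u₁ hu₁.1.1 u₂ hu₂.1.1 _ hu₁.2 _ hu₂.2 hne (by ring)
      exact (mem_erase.mp hx).1 (by rw [show b = a by omega])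
  have hB : #{u ∈ U i | ¬q.coeff (a + u) = 0} ≤ #q.coeff.support :=
    card_le_card_of_injOn (a + ·) (fun u hu => by simpa using (mem_filter.mp hu).2)
      (add_right_injective a).injOn
  have hS : #S = ∑ j, #(c j).coeff.support := card_sigma _ _
  have haS : ⟨i, a⟩ ∈ S := mem_sigma.mpr ⟨mem_univ i, ha⟩
  have := card_filter_add_card_filter_not (s := U i) fun u => q.coeff (a + u) = 0
  rw [card_erase_of_mem haS] at hA
  have := card_pos.mpr ⟨_, haS⟩
  omega

end Semiring

section Ring

variable [Ring R] {k : ℕ}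

theorem _root_.HasDistinctDifferences.le_sum_card_support {U : Fin k → Finset ℤ}
    (hU : HasDistinctDifferences U) {w : ℕ} (hcard : ∀ i, #(U i) = w)
    {c : Fin (k + 1) → R[T;T⁻¹]} (hc : c ≠ 0)
    (hcheck : ∑ i, (∑ u ∈ U i, T u) * c i.castSucc + c (Fin.last k) = 0) :
    w + 1 ≤ ∑ j, #(c j).coeff.support := by
  obtain ⟨i, hi⟩ : ∃ i : Fin k, c i.castSucc ≠ 0 := by
    by_contra! h
    refine hc (funext fun j => Fin.lastCases ?_ h j)
    simpa [h] using hcheck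
  rw [Fin.sum_univ_castSucc, eq_neg_of_add_eq_zero_right hcheck, AddMonoidAlgebra.coeff_neg,
    Finsupp.support_neg, ← hcard i]
  exact hU.card_add_one_le (fun i => c i.castSucc) hi

theorem exists_codeword_sum_card_support_eq [Nontrivial R] (p : Fin k → R[T;T⁻¹]) (i : Fin k) :
    ∃ c : Fin (k + 1) → R[T;T⁻¹], c ≠ 0 ∧ ∑ j, p j * c j.castSucc + c (Fin.last k) = 0 ∧
      ∑ j, #(c j).coeff.support = #(p i).coeff.support + 1 := by
  refine ⟨Fin.snoc (Pi.single i 1) (-p i), fun h => ?_, ?_, ?_⟩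
  · simpa using congrFun h i.castSucc
  · simp [Pi.single_apply]
  · simp [Fin.sum_univ_castSucc, Pi.single_apply, apply_ite, add_comm]

end Ring

end LaurentPolynomial

theorem reflected_code_free_distance_general (M : ℕ) (w k : ℕ) (hk : 1 ≤ k)
    (T : Fin k → Finset ℤ)
    (hcard : ∀ i, (T i).card = w)
    (hfull : ∀ i, (posDiff (T i)).card = w * (w - 1) / 2)
    (hdisj : ∀ i j : Fin k, i ≠ j → Disjoint (posDiff (T i)) (posDiff (T j)))
    (π : Equiv.Perm (Fin k)) (U : Fin k → Finset ℤ)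
    (hU : ∀ i, U i = (T (π i)).image (fun t => (M : ℤ) - t))
    (p : Fin k → LaurentPolynomial (ZMod 2))
    (hp : ∀ i, p i = ∑ u ∈ U i, LaurentPolynomial.T u) :
    IsLeast {d : ℕ | ∃ c : Fin (k + 1) → LaurentPolynomial (ZMod 2), c ≠ 0 ∧
        (∑ i : Fin k, p i * c i.castSucc) + c (Fin.last k) = 0 ∧
        d = ∑ j, wt (c j)} (w + 1) := by
  have hUcard (i : Fin k) : #(U i) = w := by
    rw [hU, card_image_of_injective _ sub_right_injective, hcard]
  have hUdiff (i : Fin k) : posDiff (U i) = posDiff (T (π i)) := by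
    rw [hU, posDiff_image_sub]
  have hUdist : HasDistinctDifferences U := hasDistinctDifferences_of_card_posDiff
    (fun i => by rw [hUdiff, hUcard, hfull])
    (fun i j hij => show Disjoint _ _ by
      rw [hUdiff, hUdiff]; exact hdisj _ _ (π.injective.ne hij))
  refine ⟨?_, ?_⟩
  · obtain ⟨c, hc, hcheck, hweight⟩ := exists_codeword_sum_card_support_eq p ⟨0, hk⟩
    refine ⟨c, hc, hcheck, ?_⟩
    change w + 1 = ∑ j, #(c j).coeff.support
    rw [hweight, hp, support_coeff_sum_T, hUcard]
  · rintro d ⟨c, hc, hcheck, rfl⟩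
    simp only [hp] at hcheck
    exact hUdist.le_sum_card_support hUcard hc hcheck

/-- Proposition 1(2), distance of the reflected code: if `T₁, …, T_k ⊆ {0, …, M}` are
size-`w` sets with `|Δ⁺(T_i)| = w(w−1)/2` and the `Δ⁺(T_i)` pairwise disjoint, `π` is a
permutation of the indices, and the reflected supports `U_i = {M − t : t ∈ T_{π(i)}}`
have indicator polynomials `p_i = Σ_{u ∈ U_i} D^u`, then the minimum total Hamming
weight of a nonzero codeword of the systematic code with parity-check row
`(p₁, …, p_k, 1)` — i.e. satisfying `Σ_i p_i · c_i + c_{k+1} = 0` — equals `w + 1`: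
the reflected systematic code has the same free distance `w + 1` as the original. -/
theorem reflected_code_free_distance (M : ℕ) (w k : ℕ) (hw : 1 ≤ w) (hk : 1 ≤ k)
    (T : Fin k → Finset ℤ)
    (hsub : ∀ i, T i ⊆ Finset.Icc 0 (M : ℤ))
    (hcard : ∀ i, (T i).card = w)
    (hfull : ∀ i, (posDiff (T i)).card = w * (w - 1) / 2)
    (hdisj : ∀ i j : Fin k, i ≠ j → Disjoint (posDiff (T i)) (posDiff (T j)))
    (π : Equiv.Perm (Fin k)) (U : Fin k → Finset ℤ)
    (hU : ∀ i, U i = (T (π i)).image (fun t => (M : ℤ) - t))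
    (p : Fin k → LaurentPolynomial (ZMod 2))
    (hp : ∀ i, p i = ∑ u ∈ U i, LaurentPolynomial.T u) :
    IsLeast {d : ℕ | ∃ c : Fin (k + 1) → LaurentPolynomial (ZMod 2), c ≠ 0 ∧
        (∑ i : Fin k, p i * c i.castSucc) + c (Fin.last k) = 0 ∧
        d = ∑ j, wt (c j)} (w + 1) :=
  reflected_code_free_distance_general M w k hk T hcard hfull hdisj π U hU p hp
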